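/- arXiv:0809.0726 — 5 statements merged into one kernel-verified Lean document; each statement's English description precedes it below -/
import Mathlib

section
/- Uniqueness of the inserted particle value: Let f be C^2 with f'' > 0 on an interval containing all relevant values, and fix x2 < x23 < x3 and values u2, u3. Then the function B(u) = (x23 − x2)·a(u2,u) + (x3 − x23)·a(u,u3) is strictly increasing in u, hence the equation B(u) = (x3 − x2)·a(u2,u3) has at most one solution u23. -/
/-!
Writing `F = ∫ f''` and `G = ∫ f'' · w dw`, the average `a(s, t) = G / F` is a mean of `w` for
the positive weight `f''`, so it lies strictly between `s` and `t`; and by additivity of both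
integrals, for `s < m < t` the average `a(s, t)` is the mediant of `a(s, m) < m < a(m, t)`,
hence strictly between them. Together with the symmetry `a(s, t) = a(t, s)` this makes `a`
strictly increasing in each argument, so `B` is a positive combination of strictly increasing
functions and therefore injective.
-/

/-- The nonlinear average, extended by `a(u,u) = u` on the diagonal. -/
noncomputable def nlAvgExt (f : ℝ → ℝ) (u1 u2 : ℝ) : ℝ :=
  if u1 = u2 then u1 else
    (∫ u in u1..u2, deriv (deriv f) u * u) / (∫ u in u1..u2, deriv (deriv f) u)

open Set intervalIntegral

theorem add_div_add_mem_Ioo {α : Type*} [Field α] [LinearOrder α]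
    [IsStrictOrderedRing α] {a b c d : α} (hb : 0 < b) (hd : 0 < d) (h : a / b < c / d) :
    (a + c) / (b + d) ∈ Ioo (a / b) (c / d) := by
  rw [div_lt_div_iff₀ hb hd] at h
  constructor
  · rw [div_lt_div_iff₀ hb (add_pos hb hd)]; linarith
  · rw [div_lt_div_iff₀ (add_pos hb hd) hd]; linarith

theorem continuous_deriv_deriv {f : ℝ → ℝ} (hf : ContDiff ℝ 2 f) :
    Continuous (deriv (deriv f)) := by
  simpa [iteratedDeriv_eq_iterate] using hf.continuous_iteratedDeriv' 2

theorem mul_integral_lt_integral_mul_id {w : ℝ → ℝ} {s t : ℝ} (hst : s < t)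
    (hc : ContinuousOn w (Icc s t)) (hpos : ∀ u ∈ Icc s t, 0 < w u) :
    s * ∫ u in s..t, w u < ∫ u in s..t, w u * u ∧
      ∫ u in s..t, w u * u < t * ∫ u in s..t, w u := by
  have hcid : ContinuousOn (fun u => w u * u) (Icc s t) := hc.mul continuousOn_id
  have hs : s ∈ Icc s t := left_mem_Icc.2 hst.le
  have ht : t ∈ Icc s t := right_mem_Icc.2 hst.le
  rw [← integral_const_mul, ← integral_const_mul]
  constructor
  · refine integral_lt_integral_of_continuousOn_of_le_of_exists_lt hst
      (continuousOn_const.mul hc) hcid (fun u hu => ?_) ⟨t, ht, ?_⟩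
    · nlinarith [hpos u (Ioc_subset_Icc_self hu), hu.1]
    · nlinarith [mul_lt_mul_of_pos_left hst (hpos t ht)]
  · refine integral_lt_integral_of_continuousOn_of_le_of_exists_lt hst
      hcid (continuousOn_const.mul hc) (fun u hu => ?_) ⟨s, hs, ?_⟩
    · nlinarith [hpos u (Ioc_subset_Icc_self hu), hu.2]
    · nlinarith [mul_lt_mul_of_pos_left hst (hpos s hs)]

section NonlinearAverage

variable {f : ℝ → ℝ} {a b s m t : ℝ}

theorem nlAvgExt_comm (f : ℝ → ℝ) (s t : ℝ) : nlAvgExt f s t = nlAvgExt f t s := by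
  rcases eq_or_ne s t with rfl | h
  · rfl
  · rw [nlAvgExt, nlAvgExt, if_neg h, if_neg h.symm, integral_symm t, integral_symm t,
      neg_div_neg_eq]

@[simp]
theorem nlAvgExt_self (f : ℝ → ℝ) (s : ℝ) : nlAvgExt f s s = s := if_pos rfl

theorem nlAvgExt_of_ne (h : s ≠ t) :
    nlAvgExt f s t = (∫ u in s..t, deriv (deriv f) u * u) / ∫ u in s..t, deriv (deriv f) u :=
  if_neg h

theorem integral_deriv_deriv_pos (hc : ContinuousOn (deriv (deriv f)) (Icc a b))
    (hpos : ∀ u ∈ Icc a b, 0 < deriv (deriv f) u) (hs : a ≤ s) (hst : s < t) (ht : t ≤ b) :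
    0 < ∫ u in s..t, deriv (deriv f) u :=
  intervalIntegral_pos_of_pos_on
    ((hc.mono (Icc_subset_Icc hs ht)).intervalIntegrable_of_Icc hst.le)
    (fun u hu => hpos u ⟨hs.trans hu.1.le, hu.2.le.trans ht⟩) hst

theorem nlAvgExt_mem_Ioo (hc : ContinuousOn (deriv (deriv f)) (Icc a b))
    (hpos : ∀ u ∈ Icc a b, 0 < deriv (deriv f) u) (hs : a ≤ s) (hst : s < t) (ht : t ≤ b) :
    nlAvgExt f s t ∈ Ioo s t := by
  have hF := integral_deriv_deriv_pos hc hpos hs hst ht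
  obtain ⟨hlo, hhi⟩ := mul_integral_lt_integral_mul_id hst (hc.mono (Icc_subset_Icc hs ht))
    fun u hu => hpos u ⟨hs.trans hu.1, hu.2.trans ht⟩
  rw [nlAvgExt_of_ne hst.ne]
  exact ⟨(lt_div_iff₀ hF).2 hlo, (div_lt_iff₀ hF).2 hhi⟩

theorem nlAvgExt_mem_Ioo_of_lt_of_lt (hc : ContinuousOn (deriv (deriv f)) (Icc a b))
    (hpos : ∀ u ∈ Icc a b, 0 < deriv (deriv f) u) (hs : a ≤ s) (hsm : s < m) (hmt : m < t)
    (ht : t ≤ b) :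
    nlAvgExt f s t ∈ Ioo (nlAvgExt f s m) (nlAvgExt f m t) := by
  have hcid : ContinuousOn (fun u => deriv (deriv f) u * u) (Icc a b) := hc.mul continuousOn_id
  have hIcc₁ : Icc s m ⊆ Icc a b := Icc_subset_Icc hs (hmt.le.trans ht)
  have hIcc₂ : Icc m t ⊆ Icc a b := Icc_subset_Icc (hs.trans hsm.le) ht
  have hF := integral_add_adjacent_intervals (μ := MeasureTheory.volume)
    ((hc.mono hIcc₁).intervalIntegrable_of_Icc hsm.le)
    ((hc.mono hIcc₂).intervalIntegrable_of_Icc hmt.le)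
  have hG := integral_add_adjacent_intervals (μ := MeasureTheory.volume)
    ((hcid.mono hIcc₁).intervalIntegrable_of_Icc hsm.le)
    ((hcid.mono hIcc₂).intervalIntegrable_of_Icc hmt.le)
  have hlt : nlAvgExt f s m < nlAvgExt f m t :=
    (nlAvgExt_mem_Ioo hc hpos hs hsm (hmt.le.trans ht)).2.trans
      (nlAvgExt_mem_Ioo hc hpos (hs.trans hsm.le) hmt ht).1
  rw [nlAvgExt_of_ne hsm.ne, nlAvgExt_of_ne hmt.ne] at hlt ⊢
  rw [nlAvgExt_of_ne (hsm.trans hmt).ne, ← hF, ← hG]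
  exact add_div_add_mem_Ioo
    (integral_deriv_deriv_pos hc hpos hs hsm (hmt.le.trans ht))
    (integral_deriv_deriv_pos hc hpos (hs.trans hsm.le) hmt ht) hlt

theorem strictMonoOn_nlAvgExt (hc : ContinuousOn (deriv (deriv f)) (Icc a b))
    (hpos : ∀ u ∈ Icc a b, 0 < deriv (deriv f) u) {v : ℝ} (hv : v ∈ Icc a b) :
    StrictMonoOn (nlAvgExt f v) (Icc a b) := by
  intro u hu u' hu' huu'
  rcases lt_trichotomy v u with hvu | rfl | huv
  · exact (nlAvgExt_mem_Ioo_of_lt_of_lt hc hpos hv.1 hvu huu' hu'.2).1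
  · simpa using (nlAvgExt_mem_Ioo hc hpos hu.1 huu' hu'.2).1
  rw [nlAvgExt_comm f v u]
  rcases lt_trichotomy v u' with hvu' | rfl | hu'v
  · exact (nlAvgExt_mem_Ioo hc hpos hu.1 huv hv.2).2.trans
      (nlAvgExt_mem_Ioo hc hpos hv.1 hvu' hu'.2).1
  · simpa using (nlAvgExt_mem_Ioo hc hpos hu.1 huv hv.2).2
  · rw [nlAvgExt_comm f v u']
    exact (nlAvgExt_mem_Ioo_of_lt_of_lt hc hpos hu.1 huu' hu'v hv.2).2

end NonlinearAverage

theorem insert_value_unique (f : ℝ → ℝ) (uL uU : ℝ) (hf : ContDiff ℝ 2 f)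
    (hconv : ∀ u ∈ Set.Icc uL uU, 0 < deriv (deriv f) u)
    (x2 x23 x3 : ℝ) (hx2 : x2 < x23) (hx3 : x23 < x3)
    (u2 u3 : ℝ) (h2 : u2 ∈ Set.Icc uL uU) (h3 : u3 ∈ Set.Icc uL uU) :
    StrictMonoOn (fun u => (x23 - x2) * nlAvgExt f u2 u + (x3 - x23) * nlAvgExt f u u3)
        (Set.Icc uL uU) ∧
      ∀ u ∈ Set.Icc uL uU, ∀ u' ∈ Set.Icc uL uU,
        (x23 - x2) * nlAvgExt f u2 u + (x3 - x23) * nlAvgExt f u u3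
            = (x3 - x2) * nlAvgExt f u2 u3 →
          (x23 - x2) * nlAvgExt f u2 u' + (x3 - x23) * nlAvgExt f u' u3
            = (x3 - x2) * nlAvgExt f u2 u3 →
          u = u' := by
  have hc := (continuous_deriv_deriv hf).continuousOn (s := Icc uL uU)
  have hleft := strictMonoOn_nlAvgExt hc hconv h2
  have hright := strictMonoOn_nlAvgExt hc hconv h3
  simp only [nlAvgExt_comm f _ u3]
  have hmono : StrictMonoOn
      (fun u => (x23 - x2) * nlAvgExt f u2 u + (x3 - x23) * nlAvgExt f u3 u) (Icc uL uU) :=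
    ((strictMono_mul_left_of_pos (sub_pos.2 hx2)).comp_strictMonoOn hleft).add
      ((strictMono_mul_left_of_pos (sub_pos.2 hx3)).comp_strictMonoOn hright)
  exact ⟨hmono, fun u hu u' hu' hu_eq hu'_eq => hmono.injOn hu hu' (hu_eq.trans hu'_eq.symm)⟩
end

section
/- Existence of the merged particle value when the merging particles coincide in space: Let f be C^2 with f'' > 0 on the range of u1, u2, u3, u4. Let x1 < x2 < x4 and suppose the two particles to be merged are both at x2 (x2 = x3 = x23). Then there exists u23 between u2 and u3 such that (x2 − x1)·a(u1,u23) + (x4 − x2)·a(u23,u4) = (x2 − x1)·a(u1,u2) + (x4 − x2)·a(u3,u4). -/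
/-!
For `c` fixed, `t ↦ a(c, t)` is the mean of the identity over `[[c, t]]` against the positive
weight `f''`. It is continuous, and monotone because its derivative at `t ≠ c` is
`f''(t) (t - a(c, t)) / ∫_c^t f''`, which is nonnegative as `a(c, t)` lies between `c` and `t`.
Hence `φ(t) = (x2 - x1) a(u1, t) + (x4 - x2) a(t, u4)` is continuous and monotone, so the
right-hand side, which mixes the values of the two summands at `u2` and `u3`, lies between
`φ(u2)` and `φ(u3)`; the intermediate value theorem gives `u23`.
-/

open Set MeasureTheory intervalIntegral

noncomputable def weightedMean (g : ℝ → ℝ) (a b : ℝ) : ℝ :=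
  if a = b then a else (∫ u in a..b, g u * u) / ∫ u in a..b, g u

theorem nlAvgExt_eq_weightedMean (f : ℝ → ℝ) :
    nlAvgExt f = weightedMean (deriv (deriv f)) := rfl

namespace weightedMean

variable {g : ℝ → ℝ} {a b c t : ℝ}

@[simp]
theorem self (g : ℝ → ℝ) (a : ℝ) : weightedMean g a a = a := if_pos rfl

theorem of_ne (hab : a ≠ b) :
    weightedMean g a b = (∫ u in a..b, g u * u) / ∫ u in a..b, g u := if_neg hab

theorem comm (g : ℝ → ℝ) (a b : ℝ) : weightedMean g a b = weightedMean g b a := by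
  rcases eq_or_ne a b with rfl | hab
  · rfl
  · rw [of_ne hab, of_ne hab.symm, integral_symm b a, integral_symm b a, neg_div_neg_eq]

theorem mem_Icc (hg : Continuous g) (hpos : ∀ u ∈ Icc a b, 0 < g u) (hab : a ≤ b) :
    weightedMean g a b ∈ Icc a b := by
  rcases hab.eq_or_lt with rfl | hab
  · simp
  have hD : 0 < ∫ u in a..b, g u :=
    intervalIntegral_pos_of_pos_on (hg.intervalIntegrable a b)
      (fun u hu => hpos u (Ioo_subset_Icc_self hu)) hab
  have hmono : ∀ v w : ℝ → ℝ, Continuous v → Continuous w → (∀ u ∈ Icc a b, v u ≤ w u) →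
      (∫ u in a..b, g u * v u) ≤ ∫ u in a..b, g u * w u := fun v w hv hw hvw =>
    integral_mono_on hab.le ((hg.mul hv).intervalIntegrable a b)
      ((hg.mul hw).intervalIntegrable a b)
      fun u hu => mul_le_mul_of_nonneg_left (hvw u hu) (hpos u hu).le
  have hlow := hmono (fun _ => a) id continuous_const continuous_id fun u hu => hu.1
  have hhigh := hmono id (fun _ => b) continuous_id continuous_const fun u hu => hu.2
  simp only [id, intervalIntegral.integral_mul_const] at hlow hhigh
  rw [of_ne hab.ne]
  exact ⟨(le_div_iff₀ hD).2 (by linarith), (div_le_iff₀ hD).2 (by linarith)⟩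

theorem mem_uIcc (hg : Continuous g) (hpos : ∀ u ∈ uIcc a b, 0 < g u) :
    weightedMean g a b ∈ uIcc a b := by
  rcases le_total a b with hab | hba
  · rw [uIcc_of_le hab] at hpos ⊢
    exact mem_Icc hg hpos hab
  · rw [uIcc_of_ge hba] at hpos ⊢
    rw [comm]
    exact mem_Icc hg hpos hba

theorem integral_ne_zero (hg : Continuous g) (hpos : ∀ u ∈ uIcc a b, 0 < g u) (hab : a ≠ b) :
    (∫ u in a..b, g u) ≠ 0 := by
  rcases hab.lt_or_gt with h | h
  · exact (intervalIntegral_pos_of_pos_on (hg.intervalIntegrable a b)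
      (fun u hu => hpos u (Ioo_subset_Icc_self.trans Icc_subset_uIcc hu)) h).ne'
  · rw [integral_symm, neg_ne_zero]
    exact (intervalIntegral_pos_of_pos_on (hg.intervalIntegrable b a)
      (fun u hu => hpos u (Ioo_subset_Icc_self.trans Icc_subset_uIcc' hu)) h).ne'

theorem hasDerivAt (hg : Continuous g) (hpos : ∀ u ∈ uIcc c t, 0 < g u) (htc : t ≠ c) :
    HasDerivAt (weightedMean g c)
      (g t * (t - weightedMean g c t) / ∫ u in c..t, g u) t := by
  have hD := integral_ne_zero hg hpos htc.symm
  have hquot := ((hg.mul continuous_id).integral_hasStrictDerivAt c t).hasDerivAt.div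
    (hg.integral_hasStrictDerivAt c t).hasDerivAt hD
  have heq : (fun s => (∫ u in c..s, g u * u) / ∫ u in c..s, g u) =ᶠ[nhds t]
      weightedMean g c := by
    filter_upwards [isOpen_ne.mem_nhds htc] with s hs
    rw [of_ne (Ne.symm hs)]
  refine (hquot.congr_of_eventuallyEq heq.symm).congr_deriv ?_
  rw [of_ne htc.symm]
  simp only [Pi.mul_apply, id]
  field_simp

theorem deriv_nonneg (hg : Continuous g) (hpos : ∀ u ∈ uIcc c t, 0 < g u) (htc : t ≠ c) :
    0 ≤ deriv (weightedMean g c) t := by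
  rw [(hasDerivAt hg hpos htc).deriv]
  have hgt : 0 ≤ g t := (hpos t right_mem_uIcc).le
  rcases htc.lt_or_gt with htc | hct
  · have hmem := mem_uIcc hg hpos
    rw [uIcc_of_ge htc.le] at hpos hmem
    have hD := intervalIntegral_pos_of_pos_on (hg.intervalIntegrable t c)
      (fun u hu => hpos u (Ioo_subset_Icc_self hu)) htc
    rw [integral_symm]
    exact div_nonneg_of_nonpos (mul_nonpos_of_nonneg_of_nonpos hgt (sub_nonpos.2 hmem.1))
      (neg_nonpos.2 hD.le)
  · rw [uIcc_of_le hct.le] at hpos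
    have hD := intervalIntegral_pos_of_pos_on (hg.intervalIntegrable c t)
      (fun u hu => hpos u (Ioo_subset_Icc_self hu)) hct
    exact div_nonneg (mul_nonneg hgt (sub_nonneg.2 (mem_Icc hg hpos hct.le).2)) hD.le

variable {s : Set ℝ} [s.OrdConnected]

theorem continuousOn (hg : Continuous g) (hpos : ∀ u ∈ s, 0 < g u) (hc : c ∈ s) :
    ContinuousOn (weightedMean g c) s := by
  intro t ht
  have hpos_uIcc : ∀ {t}, t ∈ s → ∀ u ∈ uIcc c t, 0 < g u := fun ht u hu =>
    hpos u (‹s.OrdConnected›.uIcc_subset hc ht hu)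
  rcases eq_or_ne t c with rfl | htc
  · -- `a(t, ·)` moves no farther from `t` than its argument does
    refine Metric.continuousWithinAt_iff.2 fun ε hε => ⟨ε, hε, fun x hx hxt => ?_⟩
    rw [self, Real.dist_eq] at *
    exact (abs_sub_left_of_mem_uIcc (mem_uIcc hg (hpos_uIcc hx))).trans_lt hxt
  · exact (hasDerivAt hg (hpos_uIcc ht) htc).continuousAt.continuousWithinAt

theorem monotoneOn (hg : Continuous g) (hpos : ∀ u ∈ s, 0 < g u) (hc : c ∈ s) :
    MonotoneOn (weightedMean g c) s := by
  have hpos_uIcc : ∀ {t}, t ∈ s → ∀ u ∈ uIcc c t, 0 < g u := fun ht u hu =>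
    hpos u (‹s.OrdConnected›.uIcc_subset hc ht hu)
  have hcont := continuousOn hg hpos hc
  have mono_of_subset : ∀ D ⊆ s, Convex ℝ D → c ∉ interior D →
      MonotoneOn (weightedMean g c) D := by
    intro D hDs hD hcD
    have hpos_interior : ∀ t ∈ interior D, ∀ u ∈ uIcc c t, 0 < g u := fun t ht =>
      hpos_uIcc (hDs (interior_subset ht))
    exact monotoneOn_of_deriv_nonneg hD (hcont.mono hDs)
      (fun t ht => (hasDerivAt hg (hpos_interior t ht)
        (ne_of_mem_of_not_mem ht hcD)).differentiableAt.differentiableWithinAt)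
      (fun t ht => deriv_nonneg hg (hpos_interior t ht) (ne_of_mem_of_not_mem ht hcD))
  have hsplit : s = (s ∩ Iic c) ∪ (s ∩ Ici c) := by
    rw [← inter_union_distrib_left, Iic_union_Ici, inter_univ]
  rw [hsplit]
  refine MonotoneOn.union_right
    (mono_of_subset _ inter_subset_left (‹s.OrdConnected›.inter ordConnected_Iic).convex ?_)
    (mono_of_subset _ inter_subset_left (‹s.OrdConnected›.inter ordConnected_Ici).convex ?_)
    ⟨⟨hc, mem_Iic.2 le_rfl⟩, fun _ h => h.2⟩ ⟨⟨hc, mem_Ici.2 le_rfl⟩, fun _ h => h.2⟩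
  · exact fun h => by simpa using interior_mono inter_subset_right h
  · exact fun h => by simpa using interior_mono inter_subset_right h

end weightedMean

theorem exists_mem_uIcc_mul_add_mul_eq {A B : ℝ → ℝ} {p q α β : ℝ}
    (hA : ContinuousOn A (uIcc p q)) (hB : ContinuousOn B (uIcc p q))
    (hAm : MonotoneOn A (uIcc p q)) (hBm : MonotoneOn B (uIcc p q)) (hα : 0 ≤ α) (hβ : 0 ≤ β) :
    ∃ r ∈ uIcc p q, α * A r + β * B r = α * A p + β * B q := by
  refine intermediate_value_uIcc (f := fun r => α * A r + β * B r)
    ((continuousOn_const.mul hA).add (continuousOn_const.mul hB)) ?_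
  have hp : p ∈ uIcc p q := left_mem_uIcc
  have hq : q ∈ uIcc p q := right_mem_uIcc
  rcases le_total p q with hpq | hqp
  · have hAle := mul_le_mul_of_nonneg_left (hAm hp hq hpq) hα
    have hBle := mul_le_mul_of_nonneg_left (hBm hp hq hpq) hβ
    exact mem_uIcc.2 <| Or.inl ⟨by linarith, by linarith⟩
  · have hAle := mul_le_mul_of_nonneg_left (hAm hq hp hqp) hα
    have hBle := mul_le_mul_of_nonneg_left (hBm hq hp hqp) hβ
    exact mem_uIcc.2 <| Or.inr ⟨by linarith, by linarith⟩

theorem merge_value_exists (f : ℝ → ℝ) (uL uU : ℝ) (hf : ContDiff ℝ 2 f)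
    (hconv : ∀ u ∈ Set.Icc uL uU, 0 < deriv (deriv f) u)
    (u1 u2 u3 u4 : ℝ) (h1 : u1 ∈ Set.Icc uL uU) (h2 : u2 ∈ Set.Icc uL uU)
    (h3 : u3 ∈ Set.Icc uL uU) (h4 : u4 ∈ Set.Icc uL uU)
    (x1 x2 x4 : ℝ) (hx12 : x1 < x2) (hx24 : x2 < x4) :
    ∃ u23 ∈ Set.uIcc u2 u3,
      (x2 - x1) * nlAvgExt f u1 u23 + (x4 - x2) * nlAvgExt f u23 u4
        = (x2 - x1) * nlAvgExt f u1 u2 + (x4 - x2) * nlAvgExt f u3 u4 := by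
  have hg : Continuous (deriv (deriv f)) := by
    simpa [iteratedDeriv_eq_iterate] using hf.continuous_iteratedDeriv 2 le_rfl
  have hsub : uIcc u2 u3 ⊆ Icc uL uU := uIcc_subset_Icc h2 h3
  have hcont := fun {c} (hc : c ∈ Icc uL uU) =>
    (weightedMean.continuousOn hg hconv hc).mono hsub
  have hmono := fun {c} (hc : c ∈ Icc uL uU) =>
    (weightedMean.monotoneOn hg hconv hc).mono hsub
  obtain ⟨u23, hu23, heq⟩ := exists_mem_uIcc_mul_add_mul_eq (hcont h1) (hcont h4)
    (hmono h1) (hmono h4) (sub_pos.2 hx12).le (sub_pos.2 hx24).le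
  refine ⟨u23, hu23, ?_⟩
  simp only [nlAvgExt_eq_weightedMean]
  rw [weightedMean.comm _ u23, weightedMean.comm _ u3]
  exact heq
end

section
/- Derivative bounds for the nonlinear average: Let f be C^2 with 0 < m ≤ f''(w) ≤ M for all w between u and v (u ≠ v). Then the partial derivative ∂a/∂u(u,v) satisfies (1/2)(m/M)^2 ≤ ∂a/∂u(u,v) ≤ (1/2)(M/m)^2, where a(u,v) = (∫_u^v f''(w)·w dw)/(∫_u^v f''(w) dw). -/
/-!
With `g = f''`, `N = ∫ᵤᵛ g(w) w dw` and `D = ∫ᵤᵛ g`, the quotient rule gives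
`∂a/∂u = g(u) ∫ᵤᵛ g(w) (w - u) dw / D²`. Substituting `w = u + t (v - u)` turns both integrals into
integrals over `[0, 1]`: `D = (v - u) A` and `∫ᵤᵛ g(w) (w - u) dw = (v - u)² B` with
`A = ∫₀¹ g(u + t (v - u)) dt`, `B = ∫₀¹ g(u + t (v - u)) t dt`. The factors `(v - u)²` cancel, so
`∂a/∂u = g(u) B / A²` with `g(u), A ∈ [m, M]` and `B ∈ [m/2, M/2]`, whatever the sign of `v - u`.
-/

noncomputable def nlAvg (f : ℝ → ℝ) (u1 u2 : ℝ) : ℝ :=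
  (∫ u in u1..u2, deriv (deriv f) u * u) / (∫ u in u1..u2, deriv (deriv f) u)

open Set MeasureTheory intervalIntegral AffineMap

theorem integral_eq_sub_mul_integral_lineMap (φ : ℝ → ℝ) (u v : ℝ) :
    ∫ w in u..v, φ w = (v - u) * ∫ t in (0 : ℝ)..1, φ (lineMap u v t) := by
  simp [lineMap_apply_ring', mul_comm _ (v - u)]

theorem integral_mul_sub_eq_sq_mul_integral_lineMap (φ : ℝ → ℝ) (u v : ℝ) :
    ∫ w in u..v, φ w * (w - u) = (v - u) ^ 2 * ∫ t in (0 : ℝ)..1, φ (lineMap u v t) * t := by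
  rw [integral_eq_sub_mul_integral_lineMap, ← intervalIntegral.integral_const_mul,
    ← intervalIntegral.integral_const_mul]
  simp only [lineMap_apply_ring', add_sub_cancel_right]
  congr 1
  ext t
  ring

theorem integral_zero_one_mem_Icc {h : ℝ → ℝ} {m M : ℝ} (hh : IntervalIntegrable h volume 0 1)
    (hb : ∀ t ∈ Icc (0 : ℝ) 1, h t ∈ Icc m M) : ∫ t in (0 : ℝ)..1, h t ∈ Icc m M := by
  constructor
  · simpa using integral_mono_on zero_le_one intervalIntegrable_const hh fun t ht => (hb t ht).1
  · simpa using integral_mono_on zero_le_one hh intervalIntegrable_const fun t ht => (hb t ht).2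

theorem integral_mul_id_zero_one_mem_Icc {h : ℝ → ℝ} {m M : ℝ}
    (hh : IntervalIntegrable h volume 0 1) (hb : ∀ t ∈ Icc (0 : ℝ) 1, h t ∈ Icc m M) :
    ∫ t in (0 : ℝ)..1, h t * t ∈ Icc (m / 2) (M / 2) := by
  have hht : IntervalIntegrable (fun t => h t * t) volume 0 1 :=
    hh.mul_continuousOn continuousOn_id
  have hc (c : ℝ) : IntervalIntegrable (fun t => c * t) volume 0 1 :=
    (continuous_const_mul c).intervalIntegrable 0 1
  have hc_eq (c : ℝ) : ∫ t in (0 : ℝ)..1, c * t = c / 2 := by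
    rw [intervalIntegral.integral_const_mul, integral_id]
    ring
  constructor
  · exact hc_eq m ▸ integral_mono_on zero_le_one (hc m) hht
      fun t ht => mul_le_mul_of_nonneg_right (hb t ht).1 ht.1
  · exact hc_eq M ▸ integral_mono_on zero_le_one hht (hc M)
      fun t ht => mul_le_mul_of_nonneg_right (hb t ht).2 ht.1

theorem hasDerivAt_integral_mul_id_div_integral_left {g : ℝ → ℝ} (hg : Continuous g) {u v : ℝ}
    (hD : ∫ w in u..v, g w ≠ 0) :
    HasDerivAt (fun u' => (∫ w in u'..v, g w * w) / ∫ w in u'..v, g w)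
      (g u * (∫ w in u..v, g w * (w - u)) / (∫ w in u..v, g w) ^ 2) u := by
  have hgw : Continuous fun w => g w * w := hg.mul continuous_id
  have hN := integral_hasDerivAt_left (hgw.intervalIntegrable u v)
    (hgw.stronglyMeasurableAtFilter _ _) hgw.continuousAt
  have hD' := integral_hasDerivAt_left (hg.intervalIntegrable u v)
    (hg.stronglyMeasurableAtFilter _ _) hg.continuousAt
  refine (hN.div hD' hD).congr_deriv ?_
  simp_rw [mul_sub]
  rw [integral_sub (hgw.intervalIntegrable u v) ((hg.intervalIntegrable u v).mul_const u),
    intervalIntegral.integral_mul_const]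
  ring

theorem half_sq_div_le_mul_div_sq {m M x A B : ℝ} (hm : 0 < m) (hx : x ∈ Icc m M)
    (hA : A ∈ Icc m M) (hB : B ∈ Icc (m / 2) (M / 2)) :
    1 / 2 * (m / M) ^ 2 ≤ x * B / A ^ 2 ∧ x * B / A ^ 2 ≤ 1 / 2 * (M / m) ^ 2 := by
  have hM : 0 < M := hm.trans_le (hx.1.trans hx.2)
  have hA0 : 0 < A := hm.trans_le hA.1
  have hx0 : 0 ≤ x := hm.le.trans hx.1
  have hB0 : 0 ≤ B := by linarith [hB.1]
  constructor
  · calc 1 / 2 * (m / M) ^ 2 = m * (m / 2) / M ^ 2 := by ring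
      _ ≤ x * B / A ^ 2 := div_le_div₀ (mul_nonneg hx0 hB0)
          (mul_le_mul hx.1 hB.1 (by positivity) hx0) (by positivity) (pow_le_pow_left₀ hA0.le hA.2 2)
  · calc x * B / A ^ 2 ≤ M * (M / 2) / m ^ 2 := div_le_div₀ (by positivity)
          (mul_le_mul hx.2 hB.2 hB0 hM.le) (by positivity) (pow_le_pow_left₀ hm.le hA.1 2)
      _ = 1 / 2 * (M / m) ^ 2 := by ring

theorem nlAvg_deriv_bounds_general (f : ℝ → ℝ) (hf : ContDiff ℝ 2 f)
    (u v : ℝ) (huv : u ≠ v) (m M : ℝ) (hm : 0 < m)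
    (hbound : ∀ w ∈ Set.uIcc u v, m ≤ deriv (deriv f) w ∧ deriv (deriv f) w ≤ M) :
    (1 / 2) * (m / M) ^ 2 ≤ deriv (fun u' => nlAvg f u' v) u ∧
      deriv (fun u' => nlAvg f u' v) u ≤ (1 / 2) * (M / m) ^ 2 := by
  unfold nlAvg
  set g := deriv (deriv f)
  have hg : Continuous g := (hf.iterate_deriv' 0 2).continuous
  have hh : Continuous fun t => g (lineMap u v t) := hg.comp (lineMap_continuous (R := ℝ))
  have hhb : ∀ t ∈ Icc (0 : ℝ) 1, g (lineMap u v t) ∈ Icc m M := fun t ht =>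
    hbound _ (segment_eq_uIcc u v ▸ lineMap_mem_segment ℝ u v ht)
  have hA := integral_zero_one_mem_Icc (hh.intervalIntegrable 0 1) hhb
  have hB := integral_mul_id_zero_one_mem_Icc (hh.intervalIntegrable 0 1) hhb
  have hD := integral_eq_sub_mul_integral_lineMap g u v
  have hvu : v - u ≠ 0 := sub_ne_zero.mpr huv.symm
  have hA0 : ∫ t in (0 : ℝ)..1, g (lineMap u v t) ≠ 0 := (hm.trans_le hA.1).ne'
  rw [(hasDerivAt_integral_mul_id_div_integral_left hg (hD ▸ mul_ne_zero hvu hA0)).deriv, hD,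
    integral_mul_sub_eq_sq_mul_integral_lineMap, mul_pow, ← mul_assoc, mul_comm (g u), mul_assoc,
    mul_div_mul_left _ _ (pow_ne_zero 2 hvu)]
  exact half_sq_div_le_mul_div_sq hm (hbound u left_mem_uIcc) hA hB

theorem nlAvg_deriv_bounds (f : ℝ → ℝ) (hf : ContDiff ℝ 2 f)
    (u v : ℝ) (huv : u ≠ v) (m M : ℝ) (hm : 0 < m) (hmM : m ≤ M)
    (hbound : ∀ w ∈ Set.uIcc u v, m ≤ deriv (deriv f) w ∧ deriv (deriv f) w ≤ M) :
    (1 / 2) * (m / M) ^ 2 ≤ deriv (fun u' => nlAvg f u' v) u ∧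
      deriv (fun u' => nlAvg f u' v) u ≤ (1 / 2) * (M / m) ^ 2 :=
  nlAvg_deriv_bounds_general f hf u v huv m M hm hbound
end

section
/- Second-order accuracy of the interpolation: Let w be C^3 on [−h/2, h/2] and suppose |f''(ū)| ≥ C > 0 for all ū in the range of values between w(−h/2) and w(h/2). Let v be the interpolant defined by f'(v(x)) = f'(w(−h/2)) + (f'(w(h/2)) − f'(w(−h/2)))·(x + h/2)/h. Then sup_{x ∈ [−h/2,h/2]} |v(x) − w(x)| = O(h^2) and ∫_{−h/2}^{h/2} |v(x) − w(x)| dx = O(h^3) as h → 0. -/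
/-!
With `g := f' ∘ w`, the defining relation says that `f' ∘ v` is the linear interpolant of `g`
at the endpoints, so `|f'(v x) - f'(w x)| ≤ 2 M h²` where `M` bounds `|g''|` near `0`.
Letting `h → 0` in the hypothesis gives `|f''(w 0)| ≥ C`, so `|f''| ≥ C / 2` near `w 0`, and
by the mean value theorem `f'` expands distances by at least `C / 2` there. Both `v x` and
`w x` lie in that neighbourhood for small `h`, whence `|v x - w x| ≤ 4 M h² / C`; integrating
over an interval of length `h` gives the `h³` bound.
-/

open Set Metric Filter Topology

theorem abs_sub_linearInterp_le {g g' : ℝ → ℝ} {a b c L x : ℝ} (hab : a < b)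
    (hg : ∀ y ∈ Icc a b, HasDerivWithinAt g (g' y) (Icc a b) y)
    (hg' : ∀ y ∈ Icc a b, |g' y - c| ≤ L) (hx : x ∈ Icc a b) :
    |g x - (g a + (g b - g a) * (x - a) / (b - a))| ≤ 2 * L * (b - a) := by
  have hba : 0 < b - a := sub_pos.2 hab
  -- Subtracting the linear function `c * y` does not change the interpolation error.
  set φ : ℝ → ℝ := fun y => g y - c * y with hφ
  have hφ_le : ∀ y ∈ Icc a b, |φ y - φ a| ≤ L * (b - a) := by
    intro y hy
    have hderiv : ∀ z ∈ Icc a b, HasDerivWithinAt φ (g' z - c) (Icc a b) z := fun z hz => by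
      have := (hg z hz).sub ((hasDerivWithinAt_id z _).const_mul c)
      rwa [mul_one] at this
    have := (convex_Icc a b).norm_image_sub_le_of_norm_hasDerivWithin_le hderiv
      (by simpa only [Real.norm_eq_abs] using hg') (left_mem_Icc.2 hab.le) hy
    rw [Real.norm_eq_abs, Real.norm_eq_abs, abs_of_nonneg (sub_nonneg.2 hy.1)] at this
    have hL : 0 ≤ L := (abs_nonneg _).trans (hg' a (left_mem_Icc.2 hab.le))
    exact this.trans (by gcongr; exact hy.2)
  have ht₀ : 0 ≤ (x - a) / (b - a) := div_nonneg (sub_nonneg.2 hx.1) hba.le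
  have ht₁ : (x - a) / (b - a) ≤ 1 := (div_le_one hba).2 (by linarith [hx.2])
  have hsplit : g x - (g a + (g b - g a) * (x - a) / (b - a))
      = (φ x - φ a) - (φ b - φ a) * ((x - a) / (b - a)) := by
    simp only [hφ]
    field_simp
    ring
  calc |g x - (g a + (g b - g a) * (x - a) / (b - a))|
      ≤ |φ x - φ a| + |φ b - φ a| * |(x - a) / (b - a)| := by
        rw [hsplit, ← abs_mul]; exact abs_sub _ _
    _ ≤ L * (b - a) + L * (b - a) * 1 := by
        rw [abs_of_nonneg ht₀]
        gcongr
        exacts [hφ_le x hx, (abs_nonneg _).trans (hφ_le b (right_mem_Icc.2 hab.le)),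
          hφ_le b (right_mem_Icc.2 hab.le)]
    _ = 2 * L * (b - a) := by ring

theorem abs_sub_linearInterp_le_of_abs_deriv_deriv_le {g : ℝ → ℝ} (hg : ContDiff ℝ 2 g)
    {a b M x : ℝ} (hab : a < b) (hM : ∀ y ∈ Icc a b, |deriv (deriv g) y| ≤ M)
    (hx : x ∈ Icc a b) :
    |g x - (g a + (g b - g a) * (x - a) / (b - a))| ≤ 2 * M * (b - a) ^ 2 := by
  have hg' : Differentiable ℝ (deriv g) := hg.deriv'.differentiable one_ne_zero
  have hlip : ∀ y ∈ Icc a b, |deriv g y - deriv g a| ≤ M * (b - a) := by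
    intro y hy
    have := (convex_Icc a b).norm_image_sub_le_of_norm_deriv_le (fun z _ => hg' z)
      (by simpa only [Real.norm_eq_abs] using hM) (left_mem_Icc.2 hab.le) hy
    rw [Real.norm_eq_abs, Real.norm_eq_abs, abs_of_nonneg (sub_nonneg.2 hy.1)] at this
    exact this.trans (mul_le_mul_of_nonneg_left (by linarith [hy.2])
      ((abs_nonneg _).trans (hM a (left_mem_Icc.2 hab.le))))
  calc _ ≤ 2 * (M * (b - a)) * (b - a) := abs_sub_linearInterp_le hab
        (fun y _ => ((hg.differentiable two_ne_zero) y).hasDerivAt.hasDerivWithinAt) hlip hx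
    _ = 2 * M * (b - a) ^ 2 := by ring

theorem mul_abs_sub_le_abs_sub_of_le_abs_deriv {F F' : ℝ → ℝ} {s : Set ℝ}
    (hs : s.OrdConnected) {c : ℝ} (hF : ∀ y ∈ s, HasDerivAt F (F' y) y)
    (hF' : ∀ y ∈ s, c ≤ |F' y|) {p q : ℝ} (hp : p ∈ s) (hq : q ∈ s) :
    c * |q - p| ≤ |F q - F p| := by
  wlog hpq : p < q generalizing p q
  · rcases (not_lt.1 hpq).eq_or_lt with rfl | hqp
    · simp
    · simpa only [abs_sub_comm] using this hq hp hqp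
  have hIcc : Icc p q ⊆ s := hs.out hp hq
  obtain ⟨ξ, hξ, hslope⟩ := exists_hasDerivAt_eq_slope F F' hpq
    (fun y hy => (hF y (hIcc hy)).continuousAt.continuousWithinAt)
    (fun y hy => hF y (hIcc (Ioo_subset_Icc_self hy)))
  have hqp : 0 < q - p := sub_pos.2 hpq
  have hF_sub : F q - F p = F' ξ * (q - p) := by rw [hslope]; field_simp
  rw [hF_sub, abs_mul, abs_of_pos hqp]
  exact mul_le_mul_of_nonneg_right (hF' ξ (hIcc (Ioo_subset_Icc_self hξ))) hqp.le

theorem abs_sub_le_of_eq_linearInterp_comp {F F' w : ℝ → ℝ} {s : Set ℝ}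
    (hs : s.OrdConnected) {c : ℝ} (hc : 0 < c) (hF : ∀ y ∈ s, HasDerivAt F (F' y) y)
    (hF' : ∀ y ∈ s, c ≤ |F' y|)
    (hFw : ContDiff ℝ 2 (F ∘ w)) {a b M x y : ℝ} (hab : a < b)
    (hM : ∀ z ∈ Icc a b, |deriv (deriv (F ∘ w)) z| ≤ M) (hx : x ∈ Icc a b)
    (hwx : w x ∈ s) (hy : y ∈ s)
    (hFy : F y = F (w a) + (F (w b) - F (w a)) * (x - a) / (b - a)) :
    |y - w x| ≤ 2 * M / c * (b - a) ^ 2 := by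
  have hexp := mul_abs_sub_le_abs_sub_of_le_abs_deriv hs hF hF' hwx hy
  have hinterp := abs_sub_linearInterp_le_of_abs_deriv_deriv_le hFw hab hM hx
  rw [abs_sub_comm] at hinterp
  simp only [Function.comp_apply, ← hFy] at hinterp
  rw [div_mul_eq_mul_div, le_div_iff₀ hc]
  linarith

theorem le_abs_of_forall_pos_le_abs {φ : ℝ → ℝ} (hφ : Continuous φ) {C : ℝ}
    (hC : ∀ t > 0, C ≤ |φ t|) : C ≤ |φ 0| :=
  ge_of_tendsto (hφ.abs.tendsto 0 |>.mono_left nhdsWithin_le_nhds)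
    (eventually_nhdsWithin_of_forall (s := Ioi 0) hC)

theorem intervalIntegral_abs_le_of_forall_abs_le {u : ℝ → ℝ} {a b B : ℝ} (hab : a ≤ b)
    (hu : ∀ x ∈ Icc a b, |u x| ≤ B) : (∫ x in a..b, |u x|) ≤ B * (b - a) := by
  calc (∫ x in a..b, |u x|) ≤ ‖∫ x in a..b, |u x|‖ := Real.le_norm_self _
    _ ≤ B * |b - a| := intervalIntegral.norm_integral_le_of_norm_le_const fun x hx => by
        rw [Real.norm_eq_abs, abs_abs]
        exact hu x (uIoc_subset_uIcc.trans (uIcc_of_le hab).subset hx)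
    _ = B * (b - a) := by rw [abs_of_nonneg (sub_nonneg.2 hab)]

theorem interpolation_second_order (f w : ℝ → ℝ) (hf : ContDiff ℝ 3 f)
    (hw : ContDiff ℝ 3 w) (C : ℝ) (hC : 0 < C)
    (hf'' : ∀ h : ℝ, 0 < h → ∀ u ∈ Set.uIcc (w (-(h / 2))) (w (h / 2)),
      C ≤ |deriv (deriv f) u|)
    (v : ℝ → ℝ → ℝ)
    (hv : ∀ h : ℝ, 0 < h → ∀ x ∈ Set.Icc (-(h / 2)) (h / 2),
      deriv f (v h x) = deriv f (w (-(h / 2))) +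
        (deriv f (w (h / 2)) - deriv f (w (-(h / 2)))) * (x + h / 2) / h)
    (hvrange : ∀ h : ℝ, 0 < h → ∀ x ∈ Set.Icc (-(h / 2)) (h / 2),
      v h x ∈ Set.uIcc (w (-(h / 2))) (w (h / 2))) :
    ∃ K > 0, ∃ h0 > 0, ∀ h : ℝ, 0 < h → h < h0 →
      (∀ x ∈ Set.Icc (-(h / 2)) (h / 2), |v h x - w x| ≤ K * h ^ 2) ∧
        (∫ x in (-(h / 2))..(h / 2), |v h x - w x|) ≤ K * h ^ 3 := by
  have hf' : ContDiff ℝ 2 (deriv f) := hf.deriv'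
  have hg : ContDiff ℝ 2 (deriv f ∘ w) := hf'.comp (hw.of_le (by norm_num))
  have hC₀ : C ≤ |deriv (deriv f) (w 0)| := by
    simpa using le_abs_of_forall_pos_le_abs (φ := fun h => deriv (deriv f) (w (h / 2)))
      (by have := hf'.continuous_deriv one_le_two; fun_prop)
      fun h hh => hf'' h hh _ right_mem_uIcc
  obtain ⟨δ, hδ, hfδ⟩ :
      ∃ δ > 0, ∀ y ∈ closedBall (w 0) δ, C / 2 < |deriv (deriv f) y| :=
    nhds_basis_closedBall.eventually_iff.1 <| continuousAt_const.eventually_lt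
      (hf'.continuous_deriv one_le_two).abs.continuousAt (by linarith)
  obtain ⟨ε, hε, hwε⟩ : ∃ ε > 0, ∀ x ∈ closedBall 0 ε, w x ∈ closedBall (w 0) δ :=
    nhds_basis_closedBall.eventually_iff.1 <|
      hw.continuous.continuousAt (closedBall_mem_nhds _ hδ)
  obtain ⟨M, hM⟩ := (isCompact_closedBall (0 : ℝ) ε).exists_bound_of_continuousOn
    (hg.deriv'.continuous_deriv le_rfl).continuousOn
  have hM₀ : 0 ≤ M := (norm_nonneg _).trans (hM 0 (mem_closedBall_self hε.le))
  refine ⟨4 * M / C + 1, by positivity, ε, hε, fun h hh hh₀ => ?_⟩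
  have hab : -(h / 2) < h / 2 := by linarith
  have hIcc : Icc (-(h / 2)) (h / 2) ⊆ closedBall 0 ε := fun x hx => by
    rw [Real.closedBall_eq_Icc]
    constructor <;> linarith [hx.1, hx.2]
  have hw_mem : ∀ x ∈ Icc (-(h / 2)) (h / 2), w x ∈ closedBall (w 0) δ := fun x hx =>
    hwε x (hIcc hx)
  have hv_mem : ∀ x ∈ Icc (-(h / 2)) (h / 2), v h x ∈ closedBall (w 0) δ := fun x hx =>
    (convex_closedBall _ _).ordConnected.uIcc_subset (hw_mem _ (left_mem_Icc.2 hab.le))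
      (hw_mem _ (right_mem_Icc.2 hab.le)) (hvrange h hh x hx)
  have hsup : ∀ x ∈ Icc (-(h / 2)) (h / 2), |v h x - w x| ≤ (4 * M / C + 1) * h ^ 2 := by
    intro x hx
    have := abs_sub_le_of_eq_linearInterp_comp (convex_closedBall (w 0) δ).ordConnected
      (half_pos hC) (fun y _ => (hf'.differentiable two_ne_zero y).hasDerivAt)
      (fun y hy => (hfδ y hy).le) hg hab (fun z hz => hM z (hIcc hz)) hx (hw_mem x hx)
      (hv_mem x hx) (by rw [hv h hh x hx, sub_neg_eq_add, sub_neg_eq_add, add_halves])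
    rw [sub_neg_eq_add, add_halves] at this
    calc |v h x - w x| ≤ 4 * M / C * h ^ 2 := by convert this using 2; field_simp; ring
      _ ≤ (4 * M / C + 1) * h ^ 2 := by gcongr; linarith
  refine ⟨hsup, ?_⟩
  calc (∫ x in (-(h / 2))..(h / 2), |v h x - w x|)
      ≤ (4 * M / C + 1) * h ^ 2 * (h / 2 - -(h / 2)) :=
        intervalIntegral_abs_le_of_forall_abs_le (by linarith) hsup
    _ = (4 * M / C + 1) * h ^ 3 := by ring
end

section
/- Entropy decrease under merging (Kružkov entropy): Let x1 < x2 < x4 and let u, û : [x1,x4] → ℝ be functions with u(x) ≥ û(x) on [x1,x2], u(x) ≤ û(x) on [x2,x4], and ∫_{x1}^{x4} u(x) dx = ∫_{x1}^{x4} û(x) dx. Let k be a constant. If k ≤ min_{[x1,x2]} min(u, û), or if k ≥ max_{[x2,x4]} max(u, û), then ∫_{x1}^{x4} |u(x) − k| dx ≥ ∫_{x1}^{x4} |û(x) − k| dx. -/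
open MeasureTheory intervalIntegral

theorem entropy_decrease_merge (x1 x2 x4 : ℝ) (h12 : x1 < x2) (h24 : x2 < x4)
    (u uh : ℝ → ℝ)
    (hu : IntervalIntegrable u MeasureTheory.volume x1 x4)
    (huh : IntervalIntegrable uh MeasureTheory.volume x1 x4)
    (hleft : ∀ x ∈ Set.Icc x1 x2, uh x ≤ u x)
    (hright : ∀ x ∈ Set.Icc x2 x4, u x ≤ uh x)
    (harea : (∫ x in x1..x4, u x) = ∫ x in x1..x4, uh x)
    (k : ℝ)
    (hk : (∀ x ∈ Set.Icc x1 x2, k ≤ u x ∧ k ≤ uh x) ∨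
      (∀ x ∈ Set.Icc x2 x4, u x ≤ k ∧ uh x ≤ k)) :
    (∫ x in x1..x4, |uh x - k|) ≤ ∫ x in x1..x4, |u x - k| := by
  have h14 : x1 ≤ x4 := (h12.trans h24).le
  have hsub1 : Set.uIcc x1 x2 ⊆ Set.uIcc x1 x4 := by
    rw [Set.uIcc_of_le h12.le, Set.uIcc_of_le h14]
    exact Set.Icc_subset_Icc le_rfl h24.le
  have hsub2 : Set.uIcc x2 x4 ⊆ Set.uIcc x1 x4 := by
    rw [Set.uIcc_of_le h24.le, Set.uIcc_of_le h14]
    exact Set.Icc_subset_Icc h12.le le_rfl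
  have hu1 : IntervalIntegrable u volume x1 x2 := hu.mono_set hsub1
  have hu2 : IntervalIntegrable u volume x2 x4 := hu.mono_set hsub2
  have huh1 : IntervalIntegrable uh volume x1 x2 := huh.mono_set hsub1
  have huh2 : IntervalIntegrable uh volume x2 x4 := huh.mono_set hsub2
  have hau1 : IntervalIntegrable (fun x => |u x - k|) volume x1 x2 :=
    (hu1.sub intervalIntegrable_const).abs
  have hau2 : IntervalIntegrable (fun x => |u x - k|) volume x2 x4 :=
    (hu2.sub intervalIntegrable_const).abs
  have hauh1 : IntervalIntegrable (fun x => |uh x - k|) volume x1 x2 :=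
    (huh1.sub intervalIntegrable_const).abs
  have hauh2 : IntervalIntegrable (fun x => |uh x - k|) volume x2 x4 :=
    (huh2.sub intervalIntegrable_const).abs
  -- D1 = D2
  have hD : (∫ x in x1..x2, (u x - uh x)) = ∫ x in x2..x4, (uh x - u x) := by
    have h1 : (∫ x in x1..x2, u x) + (∫ x in x2..x4, u x) = ∫ x in x1..x4, u x :=
      integral_add_adjacent_intervals hu1 hu2
    have h2 : (∫ x in x1..x2, uh x) + (∫ x in x2..x4, uh x) = ∫ x in x1..x4, uh x :=
      integral_add_adjacent_intervals huh1 huh2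
    rw [integral_sub hu1 huh1, integral_sub huh2 hu2]
    linarith
  have hsplitU : (∫ x in x1..x2, |u x - k|) + (∫ x in x2..x4, |u x - k|)
      = ∫ x in x1..x4, |u x - k| := integral_add_adjacent_intervals hau1 hau2
  have hsplitUh : (∫ x in x1..x2, |uh x - k|) + (∫ x in x2..x4, |uh x - k|)
      = ∫ x in x1..x4, |uh x - k| := integral_add_adjacent_intervals hauh1 hauh2
  rcases hk with hk | hk
  · -- k below on [x1,x2]
    have e1 : (∫ x in x1..x2, |uh x - k|)
        ≤ ∫ x in x1..x2, (|u x - k| - (u x - uh x)) := by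
      apply integral_mono_on h12.le hauh1 (hau1.sub (hu1.sub huh1))
      intro x hx
      have h1 := (hk x hx).1
      have h2 := (hk x hx).2
      have := hleft x hx
      rw [abs_of_nonneg (by linarith), abs_of_nonneg (by linarith)]
      linarith
    have e2 : (∫ x in x2..x4, |uh x - k|)
        ≤ ∫ x in x2..x4, (|u x - k| + (uh x - u x)) := by
      apply integral_mono_on h24.le hauh2 (hau2.add (huh2.sub hu2))
      intro x hx
      have := hright x hx
      have habs : |uh x - k| ≤ |u x - k| + |uh x - u x| := by
        have : uh x - k = (u x - k) + (uh x - u x) := by ring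
        rw [this]; exact abs_add_le _ _
      rw [abs_of_nonneg (by linarith : (0:ℝ) ≤ uh x - u x)] at habs
      linarith
    rw [integral_sub hau1 (hu1.sub huh1)] at e1
    rw [integral_add hau2 (huh2.sub hu2)] at e2
    linarith
  · -- k above on [x2,x4]
    have e1 : (∫ x in x1..x2, |uh x - k|)
        ≤ ∫ x in x1..x2, (|u x - k| + (u x - uh x)) := by
      apply integral_mono_on h12.le hauh1 (hau1.add (hu1.sub huh1))
      intro x hx
      have := hleft x hx
      have habs : |uh x - k| ≤ |u x - k| + |u x - uh x| := by
        have : uh x - k = (u x - k) - (u x - uh x) := by ring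
        rw [this]; exact abs_sub _ _
      rw [abs_of_nonneg (by linarith : (0:ℝ) ≤ u x - uh x)] at habs
      linarith
    have e2 : (∫ x in x2..x4, |uh x - k|)
        ≤ ∫ x in x2..x4, (|u x - k| - (uh x - u x)) := by
      apply integral_mono_on h24.le hauh2 (hau2.sub (huh2.sub hu2))
      intro x hx
      have h1 := (hk x hx).1
      have h2 := (hk x hx).2
      have := hright x hx
      rw [abs_of_nonpos (by linarith), abs_of_nonpos (by linarith)]
      linarith
    rw [integral_add hau1 (hu1.sub huh1)] at e1
    rw [integral_sub hau2 (huh2.sub hu2)] at e2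
    linarith
end
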